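/- Let N ∈ ℤ_{≥0} and suppose nb + λ + N − 1 = 0. Then for every m̄ ∈ ℤ_{≥0}^{n+1}, the column vector X ∈ R^{n+1} with entries X_j := a_j^{−1}·(m_j+1)·σ_j^{−1}(P_{m̄+ε_j}(S,a)) for 1 ≤ j ≤ n+1 satisfies A(λ,b,S,N)·X = 0, i.e. ∑_{j=1}^{n+1} A_{ij}·X_j = 0 in R for every 1 ≤ i ≤ n+1. -/

import Mathlib

open MvPolynomial

/-- The generators `h_1, …, h_n` of `R = ℂ[h_1,…,h_n]`, together with
`h_{n+1} := -(h_1 + ⋯ + h_n)`.  Indices: `i : Fin (n+1)` with `(i : ℕ) < n`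
corresponding to `h_1, …, h_n` and `i = Fin.last n` to `h_{n+1}`. -/
noncomputable def Hp (n : ℕ) (i : Fin (n + 1)) : MvPolynomial (Fin n) ℂ :=
  if h : (i : ℕ) < n then X ⟨i, h⟩ else -∑ j : Fin n, X j

/-- The automorphism `σ_i` of `R` determined by `σ_i(h_k) = h_k - δ_{k,i}` for `1 ≤ i ≤ n`,
and `σ_{n+1} = id`. -/
noncomputable def sigma (n : ℕ) (i : Fin (n + 1)) :
    MvPolynomial (Fin n) ℂ ≃ₐ[ℂ] MvPolynomial (Fin n) ℂ :=
  if h : (i : ℕ) < n then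
    AlgEquiv.ofAlgHom
      (aeval fun k => X k - if k = ⟨i, h⟩ then 1 else 0)
      (aeval fun k => X k + if k = ⟨i, h⟩ then 1 else 0)
      (by ext k : 1; by_cases hk : k = ⟨i, h⟩ <;> simp [hk])
      (by ext k : 1; by_cases hk : k = ⟨i, h⟩ <;> simp [hk])
  else AlgEquiv.refl

/-- The scalar `a^{m̄}/m̄!`. -/
noncomputable def coef (n : ℕ) (a : Fin (n + 1) → ℂ) (m : Fin (n + 1) → ℕ) : ℂ :=
  (∏ j, a j ^ m j) / ((∏ j, (m j).factorial : ℕ) : ℂ)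

/-- `P_{m̄}(S,a) = (a^{m̄}/m̄!) ∏_{s ∉ S} ∏_{k=1}^{m_s} (h_s - b - k)`. -/
noncomputable def Pm (n : ℕ) (b : ℂ) (S : Finset (Fin (n + 1))) (a : Fin (n + 1) → ℂ)
    (m : Fin (n + 1) → ℕ) : MvPolynomial (Fin n) ℂ :=
  coef n a m • ∏ s ∈ Sᶜ, ∏ k ∈ Finset.range (m s), (Hp n s - C (b + k + 1))

/-- `P'_{m̄}(S,a) = (a^{m̄}/m̄!) ∏_{s∉S, s≠n+1} ∏_{k=1}^{m_s}(h_s - b - k) ⋅ C ⋅`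
`∏_{t=1}^{m_{n+1}}(h_{n+1} + nb - t + 1)`, where
`C = ∏_{r=1}^{N-m_{n+1}}(h_{n+1} - b - 1 + r)` if `n+1 ∈ S` and `C = 1` otherwise. -/
noncomputable def P' (n : ℕ) (b : ℂ) (S : Finset (Fin (n + 1))) (a : Fin (n + 1) → ℂ)
    (N : ℕ) (m : Fin (n + 1) → ℕ) : MvPolynomial (Fin n) ℂ :=
  coef n a m •
    ((∏ s ∈ Sᶜ.erase (Fin.last n), ∏ k ∈ Finset.range (m s), (Hp n s - C (b + k + 1)))
      * (if Fin.last n ∈ S then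
            ∏ r ∈ Finset.range (N - m (Fin.last n)), (Hp n (Fin.last n) - C (b - r))
          else 1)
      * ∏ t ∈ Finset.range (m (Fin.last n)), (Hp n (Fin.last n) + C ((n : ℂ) * b - t)))

/-- `Δ_{m̄}(S,a) = (a^{m̄}/m̄!) ∏_{s∉S} ∏_{k=1}^{m_s}(h_s - b - k) ⋅`
`∏_{r=2}^{N-m_{n+1}}(h_{n+1} - b - 2 + r) ⋅ ∏_{t=1}^{m_{n+1}}(h_{n+1} + nb - t)`. -/
noncomputable def Δm (n : ℕ) (b : ℂ) (S : Finset (Fin (n + 1))) (a : Fin (n + 1) → ℂ)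
    (N : ℕ) (m : Fin (n + 1) → ℕ) : MvPolynomial (Fin n) ℂ :=
  coef n a m •
    ((∏ s ∈ Sᶜ, ∏ k ∈ Finset.range (m s), (Hp n s - C (b + k + 1)))
      * (∏ r ∈ Finset.range (N - m (Fin.last n) - 1), (Hp n (Fin.last n) - C (b - r)))
      * ∏ t ∈ Finset.range (m (Fin.last n)), (Hp n (Fin.last n) + C ((n : ℂ) * b - t - 1)))

/-- `Θ_{m̄}(S,a) = (a^{m̄}/m̄!) ∏_{s∉S, s≠n+1} ∏_{k=1}^{m_s}(h_s - b - k) ⋅`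
`∏_{k=1}^{m_{n+1}}(h_{n+1} - b - k - 1)`. -/
noncomputable def Θm (n : ℕ) (b : ℂ) (S : Finset (Fin (n + 1))) (a : Fin (n + 1) → ℂ)
    (m : Fin (n + 1) → ℕ) : MvPolynomial (Fin n) ℂ :=
  coef n a m •
    ((∏ s ∈ Sᶜ.erase (Fin.last n), ∏ k ∈ Finset.range (m s), (Hp n s - C (b + k + 1)))
      * ∏ k ∈ Finset.range (m (Fin.last n)), (Hp n (Fin.last n) - C (b + k + 2)))

/-- `Υ_{m̄}(S,a) = (a^{m̄}/m̄!) ∏_{s∉S, s≠n+1} ∏_{k=1}^{m_s}(h_s - b - k) ⋅`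
`∏_{t=1}^{m_{n+1}}(h_{n+1} + nb - t)`. -/
noncomputable def Υm (n : ℕ) (b : ℂ) (S : Finset (Fin (n + 1))) (a : Fin (n + 1) → ℂ)
    (m : Fin (n + 1) → ℕ) : MvPolynomial (Fin n) ℂ :=
  coef n a m •
    ((∏ s ∈ Sᶜ.erase (Fin.last n), ∏ k ∈ Finset.range (m s), (Hp n s - C (b + k + 1)))
      * ∏ t ∈ Finset.range (m (Fin.last n)), (Hp n (Fin.last n) + C ((n : ℂ) * b - t - 1)))

/-- `h̄_i = h_i - δ_{i,n+1}`. -/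
noncomputable def Hbar (n : ℕ) (i : Fin (n + 1)) : MvPolynomial (Fin n) ℂ :=
  Hp n i - if i = Fin.last n then 1 else 0

/-- The `(n+1) × (n+1)` matrix `A(λ,b,S,N)` with entries in `R`:
`A_{ii} = h̄_i - λ - N + 2` and, for `i ≠ j`,
`A_{ij} = (δ_{i∈S} + δ_{i∉S}(h̄_i - b)) (δ_{j∈S}(h̄_j - b) + δ_{j∉S})`. -/
noncomputable def Amat (n : ℕ) (lam b : ℂ) (S : Finset (Fin (n + 1))) (N : ℕ) :
    Matrix (Fin (n + 1)) (Fin (n + 1)) (MvPolynomial (Fin n) ℂ) :=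
  fun i j =>
    if i = j then Hbar n i - C (lam + N - 2)
    else (if i ∈ S then 1 else Hbar n i - C b) * (if j ∈ S then Hbar n j - C b else 1)

/-!
The automorphism `σ_j⁻¹` sends `h_s` to `h̄_s + δ_{sj}`. Applied to `P_{m̄+ε_j}` it therefore
turns the first factor of the extra `j`-th block into `h̄_j - b` (when `j ∉ S`) and every other
factor into the corresponding factor of `P̄_{m̄}` (`PmBar`), which is `P_{m̄}` with each `h_s`
replaced by `h̄_s`. Together with `a_j⁻¹ (m_j + 1) a^{m̄+ε_j}/(m̄+ε_j)! = a^{m̄}/m̄!` this gives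
`X_j = u_j P̄_{m̄}` with `u_j = 1` for `j ∈ S` and `u_j = h̄_j - b` otherwise (`leftFactor`). Off
the diagonal `A_{ij} = u_i v_j` with `v_j u_j = h̄_j - b`, so `∑_j h̄_j = -1` makes `u` an
eigenvector of `A` for the eigenvalue `1 - (nb + λ + N)`, which vanishes by hypothesis.
-/

open Finset
open scoped Matrix

lemma Hp_castSucc (n : ℕ) (i : Fin n) : Hp n i.castSucc = X i := by
  simp [Hp]

lemma Hp_last (n : ℕ) : Hp n (Fin.last n) = -∑ j, X j := by
  simp [Hp]

lemma sum_Hp (n : ℕ) : ∑ j, Hp n j = 0 := by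
  simp [Fin.sum_univ_castSucc, Hp_castSucc, Hp_last]

lemma sum_Hbar (n : ℕ) : ∑ j, Hbar n j = -1 := by
  simp [Hbar, sum_sub_distrib, sum_Hp]

lemma sigma_last (n : ℕ) : sigma n (Fin.last n) = AlgEquiv.refl := by
  simp [sigma]

lemma sigma_castSucc_X (n : ℕ) (i k : Fin n) :
    sigma n i.castSucc (X k) = X k - if k = i then 1 else 0 := by
  simp [sigma]

lemma sigma_Hp (n : ℕ) (j s : Fin (n + 1)) :
    sigma n j (Hp n s)
      = Hp n s - (if s = j then 1 else 0) + (if s = Fin.last n then 1 else 0) := by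
  cases j using Fin.lastCases with
  | last => simp [sigma_last]
  | cast i =>
    cases s using Fin.lastCases with
    | last => simp [Hp_last, sigma_castSucc_X, (Fin.castSucc_ne_last i).symm]; ring
    | cast k => simp [Hp_castSucc, sigma_castSucc_X, Fin.castSucc_ne_last]

lemma sigma_symm_Hp (n : ℕ) (j s : Fin (n + 1)) :
    (sigma n j).symm (Hp n s) = Hbar n s + if s = j then 1 else 0 := by
  rw [AlgEquiv.symm_apply_eq, Hbar, map_add, map_sub, sigma_Hp]
  simp only [apply_ite (sigma n j), map_one, map_zero]
  ring

lemma coef_add_single (n : ℕ) (a : Fin (n + 1) → ℂ) (m : Fin (n + 1) → ℕ) (j : Fin (n + 1))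
    (ha : a j ≠ 0) :
    (a j)⁻¹ * (m j + 1) * coef n a (fun l => m l + if l = j then 1 else 0) = coef n a m := by
  have hpow : ∏ l, a l ^ (m l + if l = j then 1 else 0) = (∏ l, a l ^ m l) * a j := by
    simp only [pow_add, prod_mul_distrib, pow_ite, pow_one, pow_zero, prod_ite_eq',
      mem_univ, if_true]
  have hfact : ∏ l, (m l + if l = j then 1 else 0).factorial
      = (∏ l, (m l).factorial) * (m j + 1) := by
    rw [← prod_ite_eq' univ j (fun l => m l + 1) |>.trans (if_pos (mem_univ j)),
      ← prod_mul_distrib]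
    refine Finset.prod_congr rfl fun l _ => ?_
    split_ifs with hl
    · subst hl; rw [Nat.factorial_succ, mul_comm]
    · simp
  have hfact_ne : ((∏ l, (m l).factorial : ℕ) : ℂ) ≠ 0 := by
    simp [prod_ne_zero_iff, Nat.factorial_ne_zero]
  rw [coef, coef, hpow, hfact]
  push_cast at hfact_ne ⊢
  field_simp

lemma prod_range_succ_add_one_sub {R : Type*} [CommRing R] {σ : Type*} (x : MvPolynomial σ R)
    (b : R) (m : ℕ) :
    ∏ k ∈ range (m + 1), (x + 1 - C (b + k + 1))
      = (x - C b) * ∏ k ∈ range m, (x - C (b + k + 1)) := by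
  rw [prod_range_succ', mul_comm]
  congr 1
  · simp
  · refine Finset.prod_congr rfl fun k _ => ?_
    simp only [map_add, map_one, map_natCast, Nat.cast_add, Nat.cast_one]
    ring

lemma sigma_symm_prod_range (n : ℕ) (b : ℂ) (j s : Fin (n + 1)) (r : ℕ) :
    (sigma n j).symm (∏ k ∈ range (r + if s = j then 1 else 0), (Hp n s - C (b + k + 1)))
      = (if s = j then Hbar n s - C b else 1) * ∏ k ∈ range r, (Hbar n s - C (b + k + 1)) := by
  have hC : ∀ c, (sigma n j).symm (C c) = C c := (sigma n j).symm.commutes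
  simp only [map_prod, map_sub, sigma_symm_Hp, hC]
  split_ifs
  · exact prod_range_succ_add_one_sub (Hbar n s) b r
  · simp

noncomputable def PmBar (n : ℕ) (b : ℂ) (S : Finset (Fin (n + 1))) (a : Fin (n + 1) → ℂ)
    (m : Fin (n + 1) → ℕ) : MvPolynomial (Fin n) ℂ :=
  coef n a m • ∏ s ∈ Sᶜ, ∏ k ∈ range (m s), (Hbar n s - C (b + k + 1))

noncomputable def leftFactor (n : ℕ) (b : ℂ) (S : Finset (Fin (n + 1))) (i : Fin (n + 1)) :
    MvPolynomial (Fin n) ℂ :=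
  if i ∈ S then 1 else Hbar n i - C b

lemma sigma_symm_Pm_add_single (n : ℕ) (b : ℂ) (S : Finset (Fin (n + 1))) (a : Fin (n + 1) → ℂ)
    (m : Fin (n + 1) → ℕ) (j : Fin (n + 1)) (ha : a j ≠ 0) :
    ((a j)⁻¹ * (m j + 1 : ℂ)) •
        (sigma n j).symm (Pm n b S a (fun l => m l + if l = j then 1 else 0))
      = leftFactor n b S j * PmBar n b S a m := by
  have hprod : ∏ s ∈ Sᶜ, (if s = j then Hbar n s - C b else 1) = leftFactor n b S j := by
    rw [prod_ite_eq', leftFactor]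
    simp only [mem_compl, ite_not]
  rw [Pm, map_smul, smul_smul, coef_add_single n a m j ha, map_prod,
    Finset.prod_congr rfl fun s _ => sigma_symm_prod_range n b j s (m s), prod_mul_distrib, hprod,
    PmBar, mul_smul_comm]

lemma Amat_mul_leftFactor (n : ℕ) (lam b : ℂ) (S : Finset (Fin (n + 1))) (N : ℕ)
    (i j : Fin (n + 1)) :
    Amat n lam b S N i j * leftFactor n b S j
      = leftFactor n b S i * (Hbar n j - C b)
        + if j = i then leftFactor n b S i * C (b - lam - N + 2) else 0 := by
  by_cases hij : i = j
  · subst hij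
    simp only [Amat, if_true, map_add, map_sub, map_natCast, map_ofNat]
    ring
  · simp only [Amat, leftFactor, if_neg hij, if_neg (Ne.symm hij), add_zero]
    split_ifs <;> ring

lemma Amat_mulVec_leftFactor (n : ℕ) (lam b : ℂ) (S : Finset (Fin (n + 1))) (N : ℕ) :
    Amat n lam b S N *ᵥ leftFactor n b S
      = (1 - (n * b + lam + N) : ℂ) • leftFactor n b S := by
  ext1 i
  simp only [Matrix.mulVec, dotProduct, Amat_mul_leftFactor, sum_add_distrib, ← mul_sum,
    sum_ite_eq', mem_univ, if_true, sum_sub_distrib, sum_Hbar, sum_const, card_univ,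
    Fintype.card_fin, Pi.smul_apply, smul_eq_C_mul]
  simp only [nsmul_eq_mul, map_sub, map_add, map_mul, map_natCast, map_one, map_ofNat]
  push_cast
  ring

theorem statement17_general (n : ℕ) (lam b : ℂ) (S : Finset (Fin (n + 1)))
    (a : Fin (n + 1) → ℂ) (ha : ∀ j, a j ≠ 0)
    (N : ℕ) (h : (n : ℂ) * b + lam + N - 1 = 0) (m : Fin (n + 1) → ℕ) (i : Fin (n + 1)) :
    ∑ j, Amat n lam b S N i j *
        ((a j)⁻¹ * (m j + 1 : ℂ)) •
          (sigma n j).symm (Pm n b S a (fun l => m l + if l = j then 1 else 0))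
      = 0 := by
  have heig : Amat n lam b S N *ᵥ leftFactor n b S = 0 := by
    rw [Amat_mulVec_leftFactor, show (1 - (n * b + lam + N) : ℂ) = 0 by linear_combination -h,
      zero_smul]
  simp only [sigma_symm_Pm_add_single n b S a m _ (ha _), ← mul_assoc, ← sum_mul]
  have hrow := congrFun heig i
  rw [Matrix.mulVec, dotProduct, Pi.zero_apply] at hrow
  rw [hrow, zero_mul]

/-- Lemma: if `nb + λ + N - 1 = 0` then, for every `m̄`, the vector with entries
`X_j = a_j⁻¹ (m_j+1) σ_j⁻¹(P_{m̄+ε_j}(S,a))` satisfies `A(λ,b,S,N) X = 0`. -/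
theorem statement17 (n : ℕ) (hn : 1 ≤ n) (lam b : ℂ) (S : Finset (Fin (n + 1)))
    (a : Fin (n + 1) → ℂ) (ha : ∀ j, a j ≠ 0) (halast : a (Fin.last n) = 1)
    (N : ℕ) (h : (n : ℂ) * b + lam + N - 1 = 0) (m : Fin (n + 1) → ℕ) (i : Fin (n + 1)) :
    ∑ j, Amat n lam b S N i j *
        ((a j)⁻¹ * (m j + 1 : ℂ)) •
          (sigma n j).symm (Pm n b S a (fun l => m l + if l = j then 1 else 0))
      = 0 :=
  statement17_general n lam b S a ha N h m i
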